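/- arXiv:math/0511451 — 2 statements merged into one kernel-verified Lean document; each statement's English description precedes it below -/
import Mathlib

section
/- Let n ≥ 2 and let Λ_1, …, Λ_{n²−1} be n×n complex matrices that are Hermitian, traceless, and satisfy Tr(Λ_i Λ_j) = 2 δ_{ij} for all i, j ∈ {1, …, n²−1} (a family of generalized Gell-Mann matrices). Then the tensor commutation matrix satisfies U_{n⊗n} = (1/n) I_n ⊗ I_n + (1/2) Σ_{i=1}^{n²−1} Λ_i ⊗ Λ_i, where ⊗ denotes the Kronecker product and I_n the n×n identity matrix. -/
open Matrix Kronecker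

/-- For any family of `n² - 1` Hermitian, traceless `n × n` complex
matrices with `Tr(Λᵢ Λⱼ) = 2 δᵢⱼ` (generalized Gell-Mann matrices), the tensor
commutation matrix `U_{n⊗n}` (with entries `δ_{i₁ j₂} δ_{i₂ j₁}`) equals
`(1/n) Iₙ ⊗ Iₙ + (1/2) Σᵢ Λᵢ ⊗ Λᵢ`. -/
theorem stmt0 (n : ℕ) (hn : 2 ≤ n) (Λ : Fin (n ^ 2 - 1) → Matrix (Fin n) (Fin n) ℂ)
    (hHerm : ∀ i, (Λ i).IsHermitian)
    (hTrace : ∀ i, (Λ i).trace = 0)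
    (hOrtho : ∀ i j, (Λ i * Λ j).trace = if i = j then 2 else 0) :
    (Matrix.of fun (i j : Fin n × Fin n) =>
        if i.1 = j.2 ∧ i.2 = j.1 then (1 : ℂ) else 0)
      = (n : ℂ)⁻¹ • ((1 : Matrix (Fin n) (Fin n) ℂ) ⊗ₖ (1 : Matrix (Fin n) (Fin n) ℂ))
        + (2 : ℂ)⁻¹ • ∑ i, Λ i ⊗ₖ Λ i := by
  have hn0 : (n : ℂ) ≠ 0 := Nat.cast_ne_zero.mpr (by omega)
  set G : Fin (n ^ 2 - 1) ⊕ Unit → Matrix (Fin n) (Fin n) ℂ :=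
    Sum.elim Λ (fun _ => 1) with hG
  have hcard : Fintype.card (Fin (n ^ 2 - 1) ⊕ Unit)
      = Module.finrank ℂ (Matrix (Fin n) (Fin n) ℂ) := by
    have h1 : 1 ≤ n ^ 2 := Nat.one_le_pow _ _ (by omega)
    simp [Module.finrank_matrix]
    rw [Nat.sub_add_cancel h1, sq]
  have htr1 : (1 : Matrix (Fin n) (Fin n) ℂ).trace = (n : ℂ) := by
    simp [Matrix.trace, Matrix.diag, Matrix.one_apply]
  have hpair : ∀ k l, (G k * G l).trace =
      (if k = l then (if k.isLeft then 2 else (n : ℂ)) else 0) := by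
    rintro (k | k) (l | l) <;>
      simp [hG, hOrtho, hTrace, htr1, Matrix.trace_mul_comm (Λ _) 1]
  have hindep : LinearIndependent ℂ G := by
    rw [Fintype.linearIndependent_iff]
    intro g hg l
    have h2 : ∑ k, g k • (G l * G k).trace = 0 := by
      calc ∑ k, g k • (G l * G k).trace = (G l * ∑ k, g k • G k).trace := by
            simp [Matrix.mul_sum, Matrix.mul_add, Matrix.mul_smul, Matrix.trace_add,
              Matrix.trace_sum, Matrix.trace_smul, smul_eq_mul]
        _ = 0 := by rw [hg, Matrix.mul_zero, Matrix.trace_zero]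
    rw [Finset.sum_congr rfl (fun k _ => by rw [hpair l k])] at h2
    simp only [smul_eq_mul, mul_ite, mul_zero, Finset.sum_ite_eq, Finset.mem_univ,
      if_true] at h2
    rcases l with l | l <;> simp at h2
    · exact h2
    · rcases h2 with h | h
      · exact h
      · omega
  have hspan : Submodule.span ℂ (Set.range G) = ⊤ :=
    hindep.span_eq_top_of_card_eq_finrank hcard
  set T : Matrix (Fin n) (Fin n) ℂ →ₗ[ℂ] Matrix (Fin n) (Fin n) ℂ :=
    { toFun := fun A => (n : ℂ)⁻¹ • (A.trace • (1 : Matrix (Fin n) (Fin n) ℂ))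
        + (2 : ℂ)⁻¹ • ∑ i, (Λ i * A).trace • Λ i
      map_add' := by
        intro A B
        simp only [Matrix.mul_add, Matrix.trace_add, add_smul, Finset.sum_add_distrib,
          smul_add]
        abel
      map_smul' := by
        intro c A
        simp [Matrix.mul_smul, Matrix.trace_smul, smul_smul, Finset.smul_sum,
          mul_comm, mul_left_comm, mul_assoc] } with hT
  have hTid : T = LinearMap.id := by
    apply LinearMap.ext_on_range hspan
    rintro (j | j)
    · simp only [hT, LinearMap.coe_mk, AddHom.coe_mk, LinearMap.id_coe, id_eq, hG,
        Sum.elim_inl]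
      rw [hTrace, Finset.sum_congr rfl (fun i _ => by rw [hOrtho i j])]
      simp [Finset.sum_ite_eq, smul_smul]
    · simp only [hT, LinearMap.coe_mk, AddHom.coe_mk, LinearMap.id_coe, id_eq, hG,
        Sum.elim_inr]
      rw [htr1, Finset.sum_congr rfl (fun i _ => by
        rw [Matrix.mul_one, hTrace i, zero_smul])]
      simp [smul_smul, inv_mul_cancel₀ hn0]
  have key : ∀ a b : Fin n, (Matrix.single a b (1 : ℂ))
      = (n : ℂ)⁻¹ • ((if a = b then (1:ℂ) else 0) • (1 : Matrix (Fin n) (Fin n) ℂ))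
        + (2 : ℂ)⁻¹ • ∑ i, (Λ i) b a • Λ i := by
    intro a b
    have h1 : ∀ i, (Λ i * Matrix.single a b (1 : ℂ)).trace = (Λ i) b a := by
      intro i
      simp [Matrix.trace, Matrix.diag, Matrix.mul_apply, Matrix.single,
        ite_and, Finset.sum_ite_eq, mul_ite, mul_one, mul_zero]
    have h2 : (Matrix.single a b (1 : ℂ)).trace = if a = b then 1 else 0 := by
      rcases eq_or_ne a b with rfl | hab
      · simp [Matrix.trace, Matrix.diag, Matrix.single, Finset.sum_ite_eq]
      · simp [Matrix.trace, Matrix.diag, Matrix.single, hab, Ne.symm hab, ite_and]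
    have := congrFun (congrArg DFunLike.coe hTid) (Matrix.single a b (1 : ℂ))
    simp only [hT, LinearMap.coe_mk, AddHom.coe_mk, LinearMap.id_coe, id_eq] at this
    rw [h2, Finset.sum_congr rfl (fun i _ => by rw [h1 i])] at this
    exact this.symm
  ext ⟨i1, i2⟩ ⟨j1, j2⟩
  have h := congrFun (congrFun (key j1 i1) i2) j2
  simp only [Matrix.single, Matrix.of_apply, Matrix.add_apply, Matrix.smul_apply,
    Matrix.sum_apply, Matrix.one_apply, smul_eq_mul] at h
  simp only [Matrix.add_apply, Matrix.smul_apply, Matrix.kroneckerMap_apply,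
    Matrix.one_apply, Matrix.sum_apply, Matrix.of_apply, smul_eq_mul]
  rw [show (if i1 = j2 ∧ i2 = j1 then (1:ℂ) else 0)
      = (if j1 = i2 ∧ i1 = j2 then (1:ℂ) else 0) by
    by_cases h1 : i1 = j2 <;> by_cases h2 : i2 = j1 <;> simp [h1, h2, eq_comm], h]
  have e : (if j1 = i1 then (1:ℂ) else 0) = (if i1 = j1 then (1:ℂ) else 0) := by
    rcases eq_or_ne i1 j1 with rfl | h1
    · simp
    · simp [h1, Ne.symm h1]
  rw [e]
end

section
/- Let n ≥ 2. For the explicit generalized Gell-Mann matrices — Λ^{(ij)} = E_{ij} + E_{ji} and Λ^{[ij]} = −i E_{ij} + i E_{ji} for 1 ≤ i < j ≤ n, and Λ^{(d)} = √(2/(d(d+1))) (Σ_{p=1}^{d} E_{pp} − d E_{d+1,d+1}) for 1 ≤ d ≤ n−1 — the tensor commutation matrix satisfies U_{n⊗n} = (1/n) I_n ⊗ I_n + (1/2) [ Σ_{1≤i<j≤n} Λ^{(ij)} ⊗ Λ^{(ij)} + Σ_{1≤i<j≤n} Λ^{[ij]} ⊗ Λ^{[ij]} + Σ_{d=1}^{n−1}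 Λ^{(d)} ⊗ Λ^{(d)} ]. -/
open Matrix Kronecker

/-- The symmetric generalized Gell-Mann matrix `Λ^{(ij)} = E_{ij} + E_{ji}`. -/
noncomputable def lamS (n : ℕ) (i j : Fin n) : Matrix (Fin n) (Fin n) ℂ :=
  Matrix.single i j 1 + Matrix.single j i 1

/-- The antisymmetric generalized Gell-Mann matrix `Λ^{[ij]} = -i E_{ij} + i E_{ji}`. -/
noncomputable def lamA (n : ℕ) (i j : Fin n) : Matrix (Fin n) (Fin n) ℂ :=
  (-Complex.I) • Matrix.single i j 1 + Complex.I • Matrix.single j i 1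

/-- The diagonal generalized Gell-Mann matrix
`Λ^{(d)} = √(2/(d(d+1))) (Σ_{p=1}^{d} E_{pp} - d E_{d+1,d+1})`, for `1 ≤ d ≤ n-1`
(here `d : Fin n` with value `d`, and indices are zero-based, so the paper's
`E_{pp}`, `1 ≤ p ≤ d`, are the `stdBasisMatrix p p 1` with `p < d`, and the
paper's `E_{d+1,d+1}` is `stdBasisMatrix d d 1`). -/
noncomputable def lamD (n : ℕ) (d : Fin n) : Matrix (Fin n) (Fin n) ℂ :=
  ((Real.sqrt (2 / (((d : ℕ) : ℝ) * (((d : ℕ) : ℝ) + 1))) : ℝ) : ℂ) •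
    ((∑ p : Fin n, if p < d then Matrix.single p p (1 : ℂ) else 0)
      - (((d : ℕ) : ℂ)) • Matrix.single d d 1)

/-!
The off-diagonal Gell-Mann pairs combine as
`Λ^{(ij)} ⊗ Λ^{(ij)} + Λ^{[ij]} ⊗ Λ^{[ij]} = 2 (E_{ij} ⊗ E_{ji} + E_{ji} ⊗ E_{ij})`,
the terms `E_{ij} ⊗ E_{ij}` cancelling because `(-i)² = -1`; summed over `i < j` this is twice the
off-diagonal part `∑_{i ≠ j} E_{ij} ⊗ E_{ji}` of `U_{n⊗n} = ∑_{i,j} E_{ij} ⊗ E_{ji}`.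
What remains is diagonal: with `v_d = (1, …, 1, -d, 0, …, 0)` (`d` ones), so that
`Λ^{(d)} = √(2/(d(d+1))) diag v_d`, one needs the completeness relation
`∑_{d<n} 2/(d(d+1)) v_d(a) v_d(b) = 2 δ_{ab} - 2/n`, which follows by induction on `n`.
-/

open Finset

section
variable {ι α : Type*} [Fintype ι]

lemma sum_sum_eq_sum_sum_ite_lt_add_sum_diag [LinearOrder ι] [AddCommMonoid α] (f : ι → ι → α) :
    ∑ i, ∑ j, f i j = ∑ i, ∑ j, (if i < j then f i j + f j i else 0) + ∑ i, f i i := by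
  have hsplit (i j : ι) : f i j =
      (if i < j then f i j else 0) + (if j < i then f i j else 0) + if i = j then f i j else 0 := by
    rcases lt_trichotomy i j with hij | rfl | hij
    · simp [hij, hij.not_gt, hij.ne]
    · simp
    · simp [hij, hij.not_gt, hij.ne']
  conv_lhs => enter [2, i, 2, j]; rw [hsplit i j]
  simp only [sum_add_distrib, ite_add_zero, sum_ite_eq, mem_univ, if_true]
  rw [sum_comm (f := fun i j => if j < i then f i j else 0)]

lemma of_swap_eq_sum_single_kronecker_single [DecidableEq ι] [Semiring α] :
    (of fun x y : ι × ι => if x.1 = y.2 ∧ x.2 = y.1 then (1 : α) else 0) =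
      ∑ i, ∑ j, single i j (1 : α) ⊗ₖ single j i 1 := by
  ext ⟨a, b⟩ ⟨c, e⟩
  simp only [Matrix.sum_apply, single_kronecker_single, single_apply, Prod.mk.injEq, of_apply]
  simp only [ite_and, mul_one, sum_ite_irrel, sum_ite_eq', mem_univ, ↓reduceIte, sum_const_zero]
  grind

lemma sum_single_kronecker_single_self [DecidableEq ι] [Semiring α] :
    ∑ i, single i i (1 : α) ⊗ₖ single i i 1 =
      diagonal fun x : ι × ι => if x.1 = x.2 then 1 else 0 := by
  ext ⟨a, b⟩ ⟨c, e⟩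
  simp only [Matrix.sum_apply, single_kronecker_single, single_apply, Prod.mk.injEq, diagonal_apply]
  simp only [mul_one, ite_and, sum_ite_eq', mem_univ, ↓reduceIte]
  grind
end

lemma lamS_kronecker_add_lamA_kronecker {n : ℕ} (i j : Fin n) :
    lamS n i j ⊗ₖ lamS n i j + lamA n i j ⊗ₖ lamA n i j =
      (2 : ℂ) • (single i j 1 ⊗ₖ single j i 1 + single j i 1 ⊗ₖ single i j 1) := by
  simp only [lamS, lamA, add_kronecker, kronecker_add, smul_kronecker, kronecker_smul]
  match_scalars <;>
    simp only [mul_one, mul_neg, neg_mul, Complex.I_mul_I, neg_neg, add_neg_cancel] <;> ring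

def gellMannDiagEntry (d p : ℕ) : ℂ := (if p < d then 1 else 0) - if p = d then (d : ℂ) else 0

lemma gellMannDiagEntry_of_lt {d p : ℕ} (h : p < d) : gellMannDiagEntry d p = 1 := by
  simp [gellMannDiagEntry, h, h.ne]

lemma gellMannDiagEntry_self (d : ℕ) : gellMannDiagEntry d d = -d := by
  simp [gellMannDiagEntry]

lemma gellMannDiagEntry_of_gt {d p : ℕ} (h : d < p) : gellMannDiagEntry d p = 0 := by
  simp [gellMannDiagEntry, h.not_gt, h.ne']

lemma sum_range_gellMannDiagEntry_mul_eq_zero {m a b : ℕ} (h : m ≤ a ∨ m ≤ b) :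
    ∑ k ∈ range m, 2 / (k * (k + 1)) * gellMannDiagEntry k a * gellMannDiagEntry k b = 0 := by
  refine sum_eq_zero fun k hk => ?_
  have hk : k < m := mem_range.1 hk
  rcases h with h | h
  · rw [gellMannDiagEntry_of_gt (hk.trans_le h), mul_zero, zero_mul]
  · rw [gellMannDiagEntry_of_gt (hk.trans_le h), mul_zero]

lemma sum_range_gellMannDiagEntry_mul {m a b : ℕ} (ha : a < m) (hb : b < m) :
    ∑ k ∈ range m, 2 / (k * (k + 1)) * gellMannDiagEntry k a * gellMannDiagEntry k b =
      2 * (if a = b then 1 else 0) - 2 / m := by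
  induction m with
  | zero => omega
  | succ m ih =>
    rw [sum_range_succ]
    push_cast
    rcases (Nat.lt_succ_iff.1 ha).lt_or_eq with ha | rfl <;>
      rcases (Nat.lt_succ_iff.1 hb).lt_or_eq with hb | rfl
    · have hm : (m : ℂ) ≠ 0 := by norm_cast; omega
      rw [ih ha hb, gellMannDiagEntry_of_lt ha, gellMannDiagEntry_of_lt hb]
      field_simp
      ring
    · have hb0 : (b : ℂ) ≠ 0 := by norm_cast; omega
      rw [sum_range_gellMannDiagEntry_mul_eq_zero (.inr le_rfl), gellMannDiagEntry_of_lt ha,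
        gellMannDiagEntry_self, if_neg ha.ne]
      field_simp
      ring
    · have ha0 : (a : ℂ) ≠ 0 := by norm_cast; omega
      rw [sum_range_gellMannDiagEntry_mul_eq_zero (.inl le_rfl), gellMannDiagEntry_of_lt hb,
        gellMannDiagEntry_self, if_neg hb.ne']
      field_simp
      ring
    · rw [sum_range_gellMannDiagEntry_mul_eq_zero (.inl le_rfl), gellMannDiagEntry_self, if_pos rfl]
      rcases eq_or_ne (b : ℂ) 0 with hb0 | hb0
      · rw [hb0]; norm_num
      · field_simp
        ring

lemma lamD_eq_diagonal {n : ℕ} (d : Fin n) :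
    lamD n d = diagonal fun p : Fin n =>
      (√(2 / ((d : ℕ) * ((d : ℕ) + 1) : ℝ)) : ℂ) * gellMannDiagEntry d p := by
  ext a c
  rw [lamD, ← sum_filter, Matrix.smul_apply, Matrix.sub_apply, Matrix.sum_apply,
    Matrix.smul_apply, diagonal_apply]
  by_cases hac : a = c
  · subst hac
    simp [single_apply, gellMannDiagEntry, Fin.val_inj, eq_comm]
  · have hsingle (p : Fin n) : single p p (1 : ℂ) a c = 0 := by
      rw [single_apply, if_neg (by rintro ⟨rfl, rfl⟩; exact hac rfl)]
    simp [hsingle, hac]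

lemma lamD_kronecker_lamD {n : ℕ} (d : Fin n) :
    lamD n d ⊗ₖ lamD n d = diagonal fun x : Fin n × Fin n =>
      2 / ((d : ℕ) * ((d : ℕ) + 1)) * gellMannDiagEntry d x.1 * gellMannDiagEntry d x.2 := by
  have hsq : (√(2 / ((d : ℕ) * ((d : ℕ) + 1) : ℝ)) : ℂ) *
      (√(2 / ((d : ℕ) * ((d : ℕ) + 1) : ℝ)) : ℂ) = 2 / ((d : ℕ) * ((d : ℕ) + 1)) := by
    rw [← Complex.ofReal_mul, Real.mul_self_sqrt (by positivity)]
    push_cast; ring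
  rw [lamD_eq_diagonal, diagonal_kronecker_diagonal]
  congr 1
  ext x
  linear_combination gellMannDiagEntry d x.1 * gellMannDiagEntry d x.2 * hsq

lemma sum_lamD_kronecker_lamD (n : ℕ) :
    ∑ d : Fin n, (if (d : ℕ) ≠ 0 then lamD n d ⊗ₖ lamD n d else 0) =
      diagonal fun x : Fin n × Fin n => ∑ k ∈ range n,
        2 / (k * (k + 1)) * gellMannDiagEntry k x.1 * gellMannDiagEntry k x.2 := by
  have hzero (d : Fin n) :
      (if (d : ℕ) ≠ 0 then lamD n d ⊗ₖ lamD n d else 0) = lamD n d ⊗ₖ lamD n d := by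
    refine ite_eq_left_iff.2 fun hd => ?_
    simp [lamD_kronecker_lamD, not_not.1 hd, gellMannDiagEntry]
  rw [sum_congr rfl fun d _ => hzero d]
  simp only [lamD_kronecker_lamD, ← diagonalAddMonoidHom_apply, ← map_sum]
  congr 1
  ext x
  rw [Finset.sum_apply, Fin.sum_univ_eq_sum_range (fun k =>
    2 / (k * (k + 1)) * gellMannDiagEntry k x.1 * gellMannDiagEntry k x.2)]

lemma inv_smul_one_add_half_sum_lamD (n : ℕ) :
    (n : ℂ)⁻¹ • ((1 : Matrix (Fin n) (Fin n) ℂ) ⊗ₖ (1 : Matrix (Fin n) (Fin n) ℂ)) +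
        (2 : ℂ)⁻¹ • ∑ d : Fin n, (if (d : ℕ) ≠ 0 then lamD n d ⊗ₖ lamD n d else 0) =
      ∑ i, single i i 1 ⊗ₖ single i i 1 := by
  rw [sum_lamD_kronecker_lamD, sum_single_kronecker_single_self, one_kronecker_one,
    ← diagonal_one, ← diagonal_smul, ← diagonal_smul, diagonal_add]
  congr 1
  ext ⟨a, b⟩
  have hn : (n : ℂ) ≠ 0 := by exact_mod_cast a.pos.ne'
  simp only [Pi.smul_apply, smul_eq_mul]
  rw [sum_range_gellMannDiagEntry_mul a.isLt b.isLt]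
  simp only [Fin.val_inj]
  split_ifs <;> field_simp <;> ring

lemma sum_lamS_kronecker_add_sum_lamA_kronecker (n : ℕ) :
    (∑ i : Fin n, ∑ j : Fin n, if i < j then lamS n i j ⊗ₖ lamS n i j else 0) +
        (∑ i : Fin n, ∑ j : Fin n, if i < j then lamA n i j ⊗ₖ lamA n i j else 0) =
      (2 : ℂ) • ∑ i : Fin n, ∑ j : Fin n,
        if i < j then single i j 1 ⊗ₖ single j i 1 + single j i 1 ⊗ₖ single i j 1 else 0 := by
  simp only [← sum_add_distrib, smul_sum, ← ite_add_zero, lamS_kronecker_add_lamA_kronecker,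
    smul_ite, smul_zero]

theorem stmt1_general (n : ℕ) :
    (Matrix.of fun (i j : Fin n × Fin n) =>
        if i.1 = j.2 ∧ i.2 = j.1 then (1 : ℂ) else 0)
      = (n : ℂ)⁻¹ • ((1 : Matrix (Fin n) (Fin n) ℂ) ⊗ₖ (1 : Matrix (Fin n) (Fin n) ℂ))
        + (2 : ℂ)⁻¹ •
          ((∑ i : Fin n, ∑ j : Fin n, if i < j then lamS n i j ⊗ₖ lamS n i j else 0)
            + (∑ i : Fin n, ∑ j : Fin n, if i < j then lamA n i j ⊗ₖ lamA n i j else 0)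
            + ∑ d : Fin n, if (d : ℕ) ≠ 0 then lamD n d ⊗ₖ lamD n d else 0) := by
  rw [of_swap_eq_sum_single_kronecker_single, sum_sum_eq_sum_sum_ite_lt_add_sum_diag,
    sum_lamS_kronecker_add_sum_lamA_kronecker, ← inv_smul_one_add_half_sum_lamD]
  module

/-- for the explicit generalized Gell-Mann matrices,
`U_{n⊗n} = (1/n) Iₙ ⊗ Iₙ + (1/2) [Σ_{i<j} Λ^{(ij)} ⊗ Λ^{(ij)}
  + Σ_{i<j} Λ^{[ij]} ⊗ Λ^{[ij]} + Σ_{d=1}^{n-1} Λ^{(d)} ⊗ Λ^{(d)}]`. -/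
theorem stmt1 (n : ℕ) (hn : 2 ≤ n) :
    (Matrix.of fun (i j : Fin n × Fin n) =>
        if i.1 = j.2 ∧ i.2 = j.1 then (1 : ℂ) else 0)
      = (n : ℂ)⁻¹ • ((1 : Matrix (Fin n) (Fin n) ℂ) ⊗ₖ (1 : Matrix (Fin n) (Fin n) ℂ))
        + (2 : ℂ)⁻¹ •
          ((∑ i : Fin n, ∑ j : Fin n, if i < j then lamS n i j ⊗ₖ lamS n i j else 0)
            + (∑ i : Fin n, ∑ j : Fin n, if i < j then lamA n i j ⊗ₖ lamA n i j else 0)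
            + ∑ d : Fin n, if (d : ℕ) ≠ 0 then lamD n d ⊗ₖ lamD n d else 0) :=
  stmt1_general n
end
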